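/- Let μ be a non-atomic Borel probability measure on the Cantor space Ω. Then there exist ω ∈ Ω and K ∈ ℕ such that 0 < μ([ω|k]) < 1 for all k ≥ K, μ([ω|k]) → 0 as k → ∞, and the series ∑_{k=K}^∞ (μ([ω|k]) − μ([ω|(k+1)])) / (μ([ω|k]) · log(1/μ([ω|k]))) diverges, i.e. its partial sums tend to +∞. -/

import Mathlib

open MeasureTheory Filter
open scoped ENNReal

/-- The cylinder `[x]` of a finite binary string `x` in the Cantor space `ℕ → Bool`:
the set of infinite sequences extending `x`. -/
def cyl (x : List Bool) : Set (ℕ → Bool) :=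
  {ω | ∀ i : ℕ, (h : i < x.length) → ω i = x.get ⟨i, h⟩}

/-- `seg ω n` is the string formed by the first `n` bits of `ω`. -/
def seg (ω : ℕ → Bool) (n : ℕ) : List Bool :=
  List.ofFn (fun i : Fin n => ω i)

lemma measurableSet_cyl (x : List Bool) : MeasurableSet (cyl x) := by
  have h : cyl x = ⋂ i : Fin x.length, (fun ω : ℕ → Bool => ω i) ⁻¹' {x.get i} := by
    ext ω
    simp only [cyl, Set.mem_setOf_eq, Set.mem_iInter, Set.mem_preimage, Set.mem_singleton_iff]
    exact ⟨fun h i => h i i.2, fun h i hi => h ⟨i, hi⟩⟩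
  rw [h]
  exact MeasurableSet.iInter fun i => (measurable_pi_apply _) (measurableSet_singleton _)

lemma cyl_nil : cyl ([] : List Bool) = Set.univ := by
  ext ω; simp [cyl]

lemma cyl_append_subset (x y : List Bool) : cyl (x ++ y) ⊆ cyl x := by
  intro ω h i hi
  have hi' : i < (x ++ y).length := by simp; omega
  have := h i hi'
  simpa [List.get_eq_getElem, List.getElem_append_left hi] using this

lemma mem_cyl_concat {x : List Bool} {b : Bool} {ω : ℕ → Bool} :
    ω ∈ cyl (x ++ [b]) ↔ ω ∈ cyl x ∧ ω x.length = b := by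
  constructor
  · intro h
    refine ⟨cyl_append_subset x [b] h, ?_⟩
    have hl : x.length < (x ++ [b]).length := by simp
    have := h x.length hl
    simpa [List.get_eq_getElem, List.getElem_append_right] using this
  · rintro ⟨h1, h2⟩ i hi
    simp only [List.length_append, List.length_singleton] at hi
    rcases Nat.lt_or_ge i x.length with h | h
    · simpa [List.get_eq_getElem, List.getElem_append_left h] using h1 i h
    · have : i = x.length := by omega
      subst this
      simpa [List.get_eq_getElem, List.getElem_append_right] using h2

lemma cyl_split (x : List Bool) :
    cyl x = cyl (x ++ [false]) ∪ cyl (x ++ [true]) := by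
  ext ω
  simp only [Set.mem_union, mem_cyl_concat]
  constructor
  · intro h; cases hb : ω x.length
    · exact Or.inl ⟨h, rfl⟩
    · exact Or.inr ⟨h, rfl⟩
  · rintro (⟨h, _⟩ | ⟨h, _⟩) <;> exact h

lemma measure_cyl_split (μ : Measure (ℕ → Bool)) (x : List Bool) :
    μ (cyl x) = μ (cyl (x ++ [false])) + μ (cyl (x ++ [true])) := by
  rw [cyl_split x]
  refine measure_union ?_ (measurableSet_cyl _)
  rw [Set.disjoint_left]
  rintro ω h1 h2
  rw [mem_cyl_concat] at h1 h2
  rw [h1.2] at h2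
  exact Bool.false_ne_true h2.2

open scoped Classical in
/-- Greedy branch: at each step extend by the child of larger measure. -/
noncomputable def br (μ : Measure (ℕ → Bool)) : ℕ → List Bool
  | 0 => []
  | n + 1 =>
      br μ n ++ [if μ (cyl (br μ n ++ [false])) ≤ μ (cyl (br μ n ++ [true])) then true else false]

open scoped Classical in
noncomputable def om (μ : Measure (ℕ → Bool)) (n : ℕ) : Bool :=
  if μ (cyl (br μ n ++ [false])) ≤ μ (cyl (br μ n ++ [true])) then true else false

lemma br_succ (μ : Measure (ℕ → Bool)) (n : ℕ) : br μ (n + 1) = br μ n ++ [om μ n] := by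
  classical
  simp [br, om]

lemma length_br (μ : Measure (ℕ → Bool)) (n : ℕ) : (br μ n).length = n := by
  induction n with
  | zero => rfl
  | succ n ih => rw [br_succ]; simp [ih]

lemma seg_succ (ω : ℕ → Bool) (n : ℕ) : seg ω (n + 1) = seg ω n ++ [ω n] := by
  show List.ofFn _ = _
  rw [List.ofFn_succ']
  simp only [seg, List.concat_eq_append, Fin.coe_castSucc, Fin.val_last]

lemma seg_om (μ : Measure (ℕ → Bool)) (n : ℕ) : seg (om μ) n = br μ n := by
  induction n with
  | zero => rfl
  | succ n ih => rw [seg_succ, br_succ, ih]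

lemma two_mul_measure_br_succ (μ : Measure (ℕ → Bool)) (n : ℕ) :
    μ (cyl (br μ n)) ≤ 2 * μ (cyl (br μ (n + 1))) := by
  classical
  rw [br_succ, measure_cyl_split μ (br μ n), two_mul, om]
  split_ifs with h
  · exact add_le_add h le_rfl
  · exact add_le_add le_rfl (le_of_lt (not_le.1 h))

lemma measure_br_pos (μ : Measure (ℕ → Bool)) [IsProbabilityMeasure μ] (n : ℕ) :
    0 < μ (cyl (br μ n)) := by
  induction n with
  | zero => simp [br, cyl_nil]
  | succ n ih =>
      by_contra h
      push_neg at h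
      have h0 : μ (cyl (br μ (n + 1))) = 0 := le_antisymm h zero_le
      have := two_mul_measure_br_succ μ n
      rw [h0, mul_zero, le_zero_iff] at this
      exact absurd this (ne_of_gt ih)

lemma measure_br_antitone (μ : Measure (ℕ → Bool)) :
    Antitone (fun n => μ (cyl (br μ n))) := by
  apply antitone_nat_of_succ_le
  intro n
  rw [br_succ]
  exact measure_mono (cyl_append_subset _ _)

lemma iInter_cyl_seg (ω : ℕ → Bool) : ⋂ n, cyl (seg ω n) = {ω} := by
  ext ω'
  simp only [Set.mem_iInter, Set.mem_singleton_iff]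
  constructor
  · intro h
    funext i
    have hi : i < (seg ω (i + 1)).length := by simp [seg]
    have := h (i + 1) i hi
    simpa only [seg, List.get_eq_getElem, List.getElem_ofFn] using this
  · rintro rfl n i hi
    simp only [seg, List.get_eq_getElem, List.getElem_ofFn]

lemma tendsto_measure_cyl_seg (μ : Measure (ℕ → Bool)) [IsProbabilityMeasure μ]
    (hna : ∀ ω : ℕ → Bool, μ {ω} = 0) (ω : ℕ → Bool) :
    Tendsto (fun k => μ (cyl (seg ω k))) atTop (nhds 0) := by
  have h1 : Antitone (fun n => cyl (seg ω n)) := by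
    apply antitone_nat_of_succ_le
    intro n
    rw [seg_succ]
    exact cyl_append_subset _ _
  have := tendsto_measure_iInter_atTop (μ := μ) (s := fun n => cyl (seg ω n))
    (fun i => (measurableSet_cyl _).nullMeasurableSet) h1 ⟨0, measure_ne_top μ _⟩
  rwa [iInter_cyl_seg, hna ω] at this

lemma key_ineq {a b : ℝ} (hb : 0 < b) (hba : b ≤ a) (ha1 : a < 1) (h2 : a ≤ 2 * b) :
    Real.log 2 / 2 * (Real.log (-Real.log b) - Real.log (-Real.log a)) ≤
      (a - b) / (a * Real.logb 2 (1 / a)) := by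
  have ha : 0 < a := lt_of_lt_of_le hb hba
  have hla : Real.log a < 0 := Real.log_neg ha ha1
  have hLa : 0 < -Real.log a := by linarith
  have hlog : Real.log b ≤ Real.log a := Real.log_le_log hb hba
  have hLb : -Real.log a ≤ -Real.log b := by linarith
  have hLb0 : 0 < -Real.log b := lt_of_lt_of_le hLa hLb
  have hlog2 : 0 < Real.log 2 := Real.log_pos one_lt_two
  have s1 : Real.log (-Real.log b) - Real.log (-Real.log a) ≤
      (-Real.log b - -Real.log a) / -Real.log a := by
    have h := Real.log_le_sub_one_of_pos (x := -Real.log b / -Real.log a) (by positivity)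
    rwa [Real.log_div hLb0.ne' hLa.ne', div_sub_one hLa.ne'] at h
  have s2 : -Real.log b - -Real.log a ≤ 2 * (a - b) / a := by
    have h := Real.log_le_sub_one_of_pos (x := a / b) (by positivity)
    rw [Real.log_div ha.ne' hb.ne', div_sub_one hb.ne'] at h
    have h3 : (a - b) / b ≤ 2 * (a - b) / a := by
      rw [div_le_div_iff₀ hb ha]
      nlinarith
    linarith
  have hR : (a - b) / (a * Real.logb 2 (1 / a)) =
      Real.log 2 * ((a - b) / (a * -Real.log a)) := by
    rw [Real.logb, one_div, Real.log_inv]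
    first
    | (field_simp; ring)
    | field_simp
  rw [hR]
  have s3 : (-Real.log b - -Real.log a) / -Real.log a ≤ 2 * (a - b) / a / -Real.log a := by
    gcongr
  have s4 : 2 * (a - b) / a / -Real.log a = 2 * ((a - b) / (a * -Real.log a)) := by
    first
    | (field_simp; ring)
    | field_simp
  calc Real.log 2 / 2 * (Real.log (-Real.log b) - Real.log (-Real.log a))
      ≤ Real.log 2 / 2 * (2 * ((a - b) / (a * -Real.log a))) := by
        apply mul_le_mul_of_nonneg_left _ (le_of_lt (half_pos hlog2))
        exact s1.trans (s3.trans_eq s4)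
    _ = Real.log 2 * ((a - b) / (a * -Real.log a)) := by ring

lemma sum_Ico_telescope (u : ℕ → ℝ) {K N : ℕ} (h : K ≤ N) :
    ∑ k ∈ Finset.Ico K N, (u (k + 1) - u k) = u N - u K := by
  induction N, h using Nat.le_induction with
  | base => simp
  | succ N hKN ih => rw [Finset.sum_Ico_succ_top hKN, ih]; ring

/-- divergence along the constructed branch, Theorem 1 of the paper.
For a non-atomic Borel probability measure `μ` on the Cantor space there exist `ω` and
`K` such that `0 < μ([ω|k]) < 1` for `k ≥ K`, `μ([ω|k]) → 0`, and the series
`∑_{k ≥ K} (μ([ω|k]) − μ([ω|k+1])) / (μ([ω|k]) · log₂(1/μ([ω|k])))` diverges to `+∞`. -/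
theorem stmt9 (μ : Measure (ℕ → Bool)) [IsProbabilityMeasure μ]
    (hna : ∀ ω : ℕ → Bool, μ {ω} = 0) :
    ∃ (ω : ℕ → Bool) (K : ℕ),
      (∀ k : ℕ, K ≤ k → 0 < μ (cyl (seg ω k)) ∧ μ (cyl (seg ω k)) < 1) ∧
      Tendsto (fun k => μ (cyl (seg ω k))) atTop (nhds 0) ∧
      Tendsto (fun N => ∑ k ∈ Finset.Ico K N,
          ((μ (cyl (seg ω k))).toReal - (μ (cyl (seg ω (k + 1)))).toReal) /
            ((μ (cyl (seg ω k))).toReal *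
              Real.logb 2 (1 / (μ (cyl (seg ω k))).toReal)))
        atTop atTop := by
  set ω := om μ with hω
  have hseg : ∀ n, seg ω n = br μ n := seg_om μ
  have htend : Tendsto (fun k => μ (cyl (seg ω k))) atTop (nhds 0) :=
    tendsto_measure_cyl_seg μ hna ω
  obtain ⟨K, hK⟩ : ∃ K, ∀ k, K ≤ k → μ (cyl (seg ω k)) < 1 := by
    have := htend.eventually_lt_const (by norm_num : (0 : ℝ≥0∞) < 1)
    exact eventually_atTop.1 this
  have hpos : ∀ k, 0 < μ (cyl (seg ω k)) := fun k => (hseg k) ▸ measure_br_pos μ k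
  refine ⟨ω, K, fun k hk => ⟨hpos k, hK k hk⟩, htend, ?_⟩
  -- real-valued sequence
  set a : ℕ → ℝ := fun k => (μ (cyl (seg ω k))).toReal with ha
  have hfin : ∀ k, μ (cyl (seg ω k)) ≠ ∞ := fun k => measure_ne_top μ _
  have hapos : ∀ k, 0 < a k := fun k => ENNReal.toReal_pos (hpos k).ne' (hfin k)
  have hamono : ∀ k, a (k + 1) ≤ a k := by
    intro k
    apply ENNReal.toReal_le_toReal (hfin _) (hfin _) |>.2
    rw [seg_succ]
    exact measure_mono (cyl_append_subset _ _)
  have hhalf : ∀ k, a k ≤ 2 * a (k + 1) := by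
    intro k
    have h := two_mul_measure_br_succ μ k
    rw [← hseg k, ← hseg (k + 1)] at h
    have h2 : (2 * μ (cyl (seg ω (k + 1)))).toReal = 2 * a (k + 1) := by
      rw [ENNReal.toReal_mul]; norm_num; rfl
    calc a k ≤ (2 * μ (cyl (seg ω (k + 1)))).toReal :=
          ENNReal.toReal_le_toReal (hfin k) (ENNReal.mul_ne_top (by norm_num) (hfin (k + 1))) |>.2 h
      _ = 2 * a (k + 1) := h2
  have ha1 : ∀ k, K ≤ k → a k < 1 := by
    intro k hk
    have := (ENNReal.toReal_lt_toReal (hfin k) (by norm_num)).2 (hK k hk)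
    simpa using this
  have ha0 : Tendsto a atTop (nhds 0) := by
    have := (ENNReal.tendsto_toReal (by norm_num : (0 : ℝ≥0∞) ≠ ∞)).comp htend
    simpa [ha, Function.comp_def] using this
  -- the comparison function
  set g : ℕ → ℝ := fun k => Real.log (-Real.log (a k)) with hg
  have hterm : ∀ k, K ≤ k →
      Real.log 2 / 2 * (g (k + 1) - g k) ≤
        (a k - a (k + 1)) / (a k * Real.logb 2 (1 / a k)) :=
    fun k hk => key_ineq (hapos (k + 1)) (hamono k) (ha1 k hk) (hhalf k)
  have hsum : ∀ N, K ≤ N →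
      Real.log 2 / 2 * (g N - g K) ≤ ∑ k ∈ Finset.Ico K N,
        (a k - a (k + 1)) / (a k * Real.logb 2 (1 / a k)) := by
    intro N hN
    calc Real.log 2 / 2 * (g N - g K)
        = ∑ k ∈ Finset.Ico K N, Real.log 2 / 2 * (g (k + 1) - g k) := by
          rw [← Finset.mul_sum, sum_Ico_telescope g hN]
      _ ≤ _ := Finset.sum_le_sum fun k hk =>
          hterm k (Finset.mem_Ico.1 hk).1
  -- the lower bound tends to infinity
  have hlogtend : Tendsto (fun N => Real.log (a N)) atTop atBot :=
    Real.tendsto_log_nhdsGT_zero.comp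
      (tendsto_nhdsWithin_of_tendsto_nhds_of_eventually_within _ ha0
        (Eventually.of_forall fun n => hapos n))
  have hLtend : Tendsto (fun N => -Real.log (a N)) atTop atTop :=
    tendsto_neg_atBot_atTop.comp hlogtend
  have hgtend : Tendsto g atTop atTop := Real.tendsto_log_atTop.comp hLtend
  have hlower : Tendsto (fun N => Real.log 2 / 2 * (g N - g K)) atTop atTop := by
    apply Tendsto.const_mul_atTop (half_pos (Real.log_pos one_lt_two))
    simpa [sub_eq_add_neg] using tendsto_atTop_add_const_right atTop (-(g K)) hgtend
  apply tendsto_atTop_mono' atTop _ hlower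
  filter_upwards [eventually_ge_atTop K] with N hN
  exact hsum N hN
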